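/- Let P be a θ-invariant probability measure with θ a measurable bijection, and B ∈ 𝒜 with P(B) > 0. Then E[T̃_B | B] = 1 / P(B | T_B < ∞), where E[T̃_B | B] = E[T̃_B 1_B]/P(B) and P(B | T_B < ∞) = P(B ∩ {T_B < ∞})/P(T_B < ∞). -/
import Mathlib

open MeasureTheory
open scoped ENNReal Classical
noncomputable section

/-- First hitting time `inf {n ≥ 1 : θ^n ω ∈ B}` valued in `ℕ∞` (`⊤` if never). -/
def hitT {Ω : Type*} (θ : Ω → Ω) (B : Set Ω) (ω : Ω) : ℕ∞ :=
  ⨅ (n : ℕ) (_ : 0 < n ∧ θ^[n] ω ∈ B), (n : ℕ∞)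

/-- Number of visits to `A` strictly before the hitting time of `B` (in `[0,∞]`). -/
def countM {Ω : Type*} (θ : Ω → Ω) (B A : Set Ω) (ω : Ω) : ℝ≥0∞ :=
  ∑' n : ℕ, if (n : ℕ∞) < hitT θ B ω ∧ θ^[n] ω ∈ A then 1 else 0

section Aux

variable {Ω : Type*}

lemma hitT_lt_top_iff (θ : Ω → Ω) (B : Set Ω) (ω : Ω) :
    hitT θ B ω < ⊤ ↔ ∃ n, 0 < n ∧ θ^[n] ω ∈ B := by
  constructor
  · intro h
    by_contra hc
    push_neg at hc
    have htop : hitT θ B ω = ⊤ := by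
      simp only [hitT, iInf_eq_top]
      intro n hn
      exact absurd hn.2 (hc n hn.1)
    simp [htop] at h
  · rintro ⟨n, hn⟩
    refine lt_of_le_of_lt (iInf₂_le n hn) ?_
    exact_mod_cast lt_top_iff_ne_top.2 (by simp)

lemma lt_hitT_iff (θ : Ω → Ω) (B : Set Ω) (ω : Ω) (k : ℕ) :
    (k : ℕ∞) < hitT θ B ω ↔ ∀ n, 0 < n → n ≤ k → θ^[n] ω ∉ B := by
  constructor
  · intro h n hn hnk hmem
    have hle : hitT θ B ω ≤ (n : ℕ∞) := iInf₂_le n ⟨hn, hmem⟩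
    have hk : (k : ℕ∞) < (n : ℕ∞) := lt_of_lt_of_le h hle
    exact absurd (Nat.cast_le.mpr hnk) (not_le.mpr hk)
  · intro h
    rw [← ENat.add_one_le_iff (by simp : (k : ℕ∞) ≠ ⊤)]
    refine le_iInf₂ fun n hn => ?_
    have hnk : ¬ n ≤ k := fun hle => h n hn.1 hle hn.2
    have : k < n := Nat.lt_of_not_le (by omega)
    exact_mod_cast Nat.succ_le_of_lt this

lemma enat_eq_tsum (m : ℕ∞) :
    (m : ℝ≥0∞) = ∑' k : ℕ, if (k : ℕ∞) < m then (1 : ℝ≥0∞) else 0 := by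
  cases m with
  | top =>
    have : ∀ k : ℕ, (if (k : ℕ∞) < (⊤ : ℕ∞) then (1 : ℝ≥0∞) else 0) = 1 := by
      intro k
      rw [if_pos]
      exact_mod_cast lt_top_iff_ne_top.2 (by simp)
    rw [tsum_congr this, ENNReal.tsum_const_eq_top_of_ne_zero one_ne_zero]
    simp
  | coe n =>
    have hz : ∀ k : ℕ, k ∉ Finset.range n →
        (if (k : ℕ∞) < ((n : ℕ) : ℕ∞) then (1 : ℝ≥0∞) else 0) = 0 := by
      intro k hk
      rw [if_neg]
      exact fun hlt => hk (Finset.mem_range.2 (by exact_mod_cast hlt))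
    rw [tsum_eq_sum hz]
    have : ∀ k ∈ Finset.range n,
        (if (k : ℕ∞) < ((n : ℕ) : ℕ∞) then (1 : ℝ≥0∞) else 0) = 1 := by
      intro k hk
      rw [if_pos]
      exact_mod_cast Finset.mem_range.1 hk
    rw [Finset.sum_congr rfl this]
    simp

end Aux

/-- Backward Kac: `E[T̃_B | B] = 1 / P(B | T_B < ∞)`. -/
theorem backward_kac_conditional {Ω : Type*} [MeasurableSpace Ω]
    (θ : Ω ≃ Ω) (hθ : Measurable θ) (hθ' : Measurable θ.symm)
    (P : Measure Ω) [IsProbabilityMeasure P]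
    (hinv : ∀ A : Set Ω, MeasurableSet A → P (⇑θ ⁻¹' A) = P A)
    (B : Set Ω) (hB : MeasurableSet B) (hpos : 0 < P B) :
    (∫⁻ ω in B, (hitT (⇑θ.symm) B ω : ℝ≥0∞) ∂P) / P B
      = 1 / (P (B ∩ {ω | hitT (⇑θ) B ω < ⊤}) / P {ω | hitT (⇑θ) B ω < ⊤}) := by
  classical
  set S : Set Ω := {ω | hitT (⇑θ) B ω < ⊤} with hS_def
  -- measurability of S
  have hS_eq : S = ⋃ n : ℕ, ⋃ _ : 0 < n, (⇑θ)^[n] ⁻¹' B := by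
    ext ω
    simp [hS_def, hitT_lt_top_iff, Set.mem_iUnion]
  have hSm : MeasurableSet S := by
    rw [hS_eq]
    exact MeasurableSet.iUnion fun n => MeasurableSet.iUnion fun _ =>
      (hθ.iterate n) hB
  -- sets A' k
  set A : ℕ → Set Ω := fun k => {ω | (k : ℕ∞) < hitT (⇑θ.symm) B ω} with hA_def
  have hA_eq : ∀ k, A k = ⋂ n : ℕ, ⋂ _ : 0 < n ∧ n ≤ k, (⇑θ.symm)^[n] ⁻¹' Bᶜ := by
    intro k
    ext ω
    simp [hA_def, lt_hitT_iff, Set.mem_iInter, and_imp]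
  have hAm : ∀ k, MeasurableSet (A k) := by
    intro k
    rw [hA_eq]
    exact MeasurableSet.iInter fun n => MeasurableSet.iInter fun _ =>
      (hθ'.iterate n) hB.compl
  -- sets D k
  set D : ℕ → Set Ω := fun k =>
    {ω | (⇑θ)^[k] ω ∈ B ∧ ∀ i < k, (⇑θ)^[i] ω ∉ B} with hD_def
  have hDm : ∀ k, MeasurableSet (D k) := by
    intro k
    have : D k = ((⇑θ)^[k] ⁻¹' B) ∩ ⋂ i : ℕ, ⋂ _ : i < k, (⇑θ)^[i] ⁻¹' Bᶜ := by
      ext ω; simp [hD_def, Set.mem_iInter]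
    rw [this]
    exact ((hθ.iterate k) hB).inter
      (MeasurableSet.iInter fun i => MeasurableSet.iInter fun _ => (hθ.iterate i) hB.compl)
  -- invariance under iterates
  have hinv_it : ∀ (k : ℕ) (A : Set Ω), MeasurableSet A → P ((⇑θ)^[k] ⁻¹' A) = P A := by
    intro k
    induction k with
    | zero => intro A _; simp
    | succ k ih =>
      intro A hA
      rw [Function.iterate_succ, Set.preimage_comp, hinv _ ((hθ.iterate k) hA), ih A hA]
  -- step 1: the integral equals ∑' k, P (A k ∩ B)
  have step1 : (∫⁻ ω in B, (hitT (⇑θ.symm) B ω : ℝ≥0∞) ∂P) = ∑' k : ℕ, P (A k ∩ B) := by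
    have h1 : (∫⁻ ω in B, (hitT (⇑θ.symm) B ω : ℝ≥0∞) ∂P)
        = ∫⁻ ω in B, ∑' k : ℕ, (A k).indicator (fun _ => (1 : ℝ≥0∞)) ω ∂P := by
      refine lintegral_congr fun ω => ?_
      rw [enat_eq_tsum]
      refine tsum_congr fun k => ?_
      simp only [Set.indicator_apply, hA_def, Set.mem_setOf_eq]
    rw [h1, lintegral_tsum fun k =>
      ((measurable_const.indicator (hAm k)).aemeasurable)]
    refine tsum_congr fun k => ?_
    rw [lintegral_indicator_const (hAm k), one_mul, Measure.restrict_apply (hAm k)]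
  -- step 2: P (A k ∩ B) = P (D k)
  have step2 : ∀ k, P (A k ∩ B) = P (D k) := by
    intro k
    have hpre : (⇑θ)^[k] ⁻¹' (A k ∩ B) = D k := by
      ext ω
      have hsymm : ∀ n ≤ k, (⇑θ.symm)^[n] ((⇑θ)^[k] ω) = (⇑θ)^[k - n] ω := by
        intro n hn
        have h1 : (⇑θ)^[k] ω = (⇑θ)^[n] ((⇑θ)^[k - n] ω) := by
          rw [← Function.iterate_add_apply]
          congr 1
          omega
        rw [h1]
        exact (Function.LeftInverse.iterate θ.symm_apply_apply n) _
      simp only [Set.mem_preimage, Set.mem_inter_iff, hA_def, Set.mem_setOf_eq,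
        lt_hitT_iff, hD_def]
      constructor
      · rintro ⟨hall, hmem⟩
        refine ⟨hmem, fun i hi hiB => ?_⟩
        have := hall (k - i) (by omega) (by omega)
        rw [hsymm (k - i) (by omega)] at this
        have hki : k - (k - i) = i := by omega
        rw [hki] at this
        exact this hiB
      · rintro ⟨hmem, hall⟩
        refine ⟨fun n hn hnk hnB => ?_, hmem⟩
        rw [hsymm n hnk] at hnB
        exact hall (k - n) (by omega) hnB
    rw [← hpre, hinv_it k _ ((hAm k).inter hB)]
  -- step 3: D k are pairwise disjoint with union B ∪ S
  have hdisj : Pairwise (Function.onFun Disjoint D) := by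
    intro i j hij
    rcases lt_or_gt_of_ne hij with h | h
    · exact Set.disjoint_left.2 fun ω hωi hωj => hωj.2 i h hωi.1
    · exact Set.disjoint_left.2 fun ω hωi hωj => hωi.2 j h hωj.1
  have hunion : (⋃ k, D k) = B ∪ S := by
    ext ω
    simp only [Set.mem_iUnion, Set.mem_union, hD_def, Set.mem_setOf_eq, hS_def,
      hitT_lt_top_iff]
    constructor
    · rintro ⟨k, hk, -⟩
      rcases Nat.eq_zero_or_pos k with rfl | hk0
      · exact Or.inl (by simpa using hk)
      · exact Or.inr ⟨k, hk0, hk⟩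
    · intro h
      have hex : ∃ k, (⇑θ)^[k] ω ∈ B := by
        rcases h with h | ⟨n, _, hn⟩
        · exact ⟨0, by simpa using h⟩
        · exact ⟨n, hn⟩
      refine ⟨Nat.find hex, Nat.find_spec hex, fun i hi => Nat.find_min hex hi⟩
  have step3 : ∑' k : ℕ, P (D k) = P (B ∪ S) := by
    rw [← measure_iUnion hdisj hDm, hunion]
  -- Poincaré recurrence: P (B \ S) = 0
  have hmp : MeasurePreserving (⇑θ) P P :=
    ⟨hθ, Measure.ext fun s hs => by rw [Measure.map_apply hθ hs, hinv s hs]⟩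
  have hnull : P (B \ S) = 0 := by
    have hcons := hmp.conservative.ae_mem_imp_frequently_image_mem hB.nullMeasurableSet
    have h0 : P {ω | ¬ (ω ∈ B → ∃ᶠ n in Filter.atTop, (⇑θ)^[n] ω ∈ B)} = 0 :=
      ae_iff.mp hcons
    refine measure_mono_null ?_ h0
    intro ω hω
    simp only [Set.mem_setOf_eq]
    intro himp
    obtain ⟨n, hn1, hnB⟩ := Filter.frequently_atTop.1 (himp hω.1) 1
    exact hω.2 ((hitT_lt_top_iff (⇑θ) B ω).2 ⟨n, by omega, hnB⟩)
  -- measure identities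
  have hBS_inter : P (B ∩ S) = P B := by
    have := measure_inter_add_diff B hSm (μ := P)
    rw [hnull, add_zero] at this
    exact this
  have hBS_union : P (B ∪ S) = P S := by
    refine le_antisymm ?_ (measure_mono Set.subset_union_right)
    calc P (B ∪ S) = P ((B \ S) ∪ S) := by rw [Set.diff_union_self]
      _ ≤ P (B \ S) + P S := measure_union_le _ _
      _ = P S := by rw [hnull, zero_add]
  have hPB_ne0 : P B ≠ 0 := hpos.ne'
  have hPS_ne0 : P S ≠ 0 := by
    intro h
    have : P (B ∩ S) ≤ P S := measure_mono Set.inter_subset_right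
    rw [hBS_inter, h, nonpos_iff_eq_zero] at this
    exact hPB_ne0 this
  -- conclude
  rw [step1]
  have : ∑' k : ℕ, P (A k ∩ B) = P S := by
    rw [tsum_congr step2, step3, hBS_union]
  rw [this, hBS_inter, one_div,
    ENNReal.inv_div (Or.inl (measure_ne_top P S)) (Or.inl hPS_ne0)]
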